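/- For every integer m ≥ 1 and every natural number s, the following are equivalent: (i) (0,m) ∼_H (2^s − 1, m); (ii) 2^m − 1 divides 2^s − 1; (iii) m divides s. -/

import Mathlib

/-- The ring of dyadic rationals `ℤ[1/2]`, as a subring of `ℚ`. -/
def DyadicQ : Subring ℚ := Subring.closure {(2:ℚ)⁻¹}

lemma DyadicQ.two_mem : (2:ℚ) ∈ DyadicQ := by
  have := add_mem (Subring.one_mem DyadicQ) (Subring.one_mem DyadicQ)
  rw [one_add_one_eq_two] at this
  exact this

lemma DyadicQ.half_mem : (2:ℚ)⁻¹ ∈ DyadicQ := Subring.subset_closure rfl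

/-- `2` as a unit of `ℤ[1/2]`. -/
def DyadicQ.two : DyadicQˣ where
  val := ⟨2, DyadicQ.two_mem⟩
  inv := ⟨(2:ℚ)⁻¹, DyadicQ.half_mem⟩
  val_inv := by ext; norm_num
  inv_val := by ext; norm_num

/-- The powers `2^m` for `m : ℤ`, as elements of `ℤ[1/2]`. -/
def pow2 (m : ℤ) : DyadicQ := ((DyadicQ.two ^ m : DyadicQˣ) : DyadicQ)

lemma pow2_add (m q : ℤ) : pow2 (m + q) = pow2 m * pow2 q := by
  simp [pow2, zpow_add]

lemma pow2_zero : pow2 0 = 1 := by simp [pow2]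

/-- The group `H = ℤ[1/2] ⋊ ℤ`, where `ℤ` acts by powers of `2`;
multiplication is `(r,m)·(s,q) = (r + 2^m·s, m+q)`. -/
@[ext] structure Hgrp where
  r : DyadicQ
  m : ℤ

instance : Mul Hgrp := ⟨fun x y => ⟨x.r + pow2 x.m * y.r, x.m + y.m⟩⟩
instance : One Hgrp := ⟨⟨0, 0⟩⟩
instance : Inv Hgrp := ⟨fun x => ⟨-(pow2 (-x.m) * x.r), -x.m⟩⟩

lemma Hgrp.mul_def (x y : Hgrp) : x * y = ⟨x.r + pow2 x.m * y.r, x.m + y.m⟩ := rfl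
lemma Hgrp.one_def : (1 : Hgrp) = ⟨0, 0⟩ := rfl
lemma Hgrp.inv_def (x : Hgrp) : x⁻¹ = ⟨-(pow2 (-x.m) * x.r), -x.m⟩ := rfl

instance : Group Hgrp where
  mul_assoc a b c := by
    simp only [Hgrp.mul_def, Hgrp.mk.injEq, pow2_add]
    constructor <;> ring
  one_mul a := by
    obtain ⟨r, m⟩ := a
    simp only [Hgrp.one_def, Hgrp.mul_def, Hgrp.mk.injEq, pow2_zero]
    constructor <;> ring
  mul_one a := by
    obtain ⟨r, m⟩ := a
    simp only [Hgrp.one_def, Hgrp.mul_def, Hgrp.mk.injEq, pow2_zero]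
    constructor <;> ring
  inv_mul_cancel a := by
    simp only [Hgrp.inv_def, Hgrp.mul_def, Hgrp.one_def, Hgrp.mk.injEq]
    constructor <;> ring

/-- Conjugacy in `H`. -/
def conjH (x y : Hgrp) : Prop := ∃ z : Hgrp, z * x * z⁻¹ = y

/-- The element `a = (1,0)` of `H`. -/
def aH : Hgrp := ⟨1, 0⟩
/-- The element `t = (0,1)` of `H`. -/
def tH : Hgrp := ⟨0, 1⟩
lemma aH_zpow (n : ℤ) : aH ^ n = Hgrp.mk (n : DyadicQ) 0 := by
  induction n using Int.induction_on with
  | zero => simp [Hgrp.one_def]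
  | succ k ih =>
      rw [zpow_add_one, ih]
      simp only [aH, Hgrp.mul_def, Hgrp.mk.injEq, pow2_zero]
      push_cast
      constructor <;> first | ring | (simp; done) | (simp; ring) | (simp [sub_eq_add_neg])
  | pred k ih =>
      rw [zpow_sub_one, ih]
      simp only [aH, Hgrp.inv_def, Hgrp.mul_def, Hgrp.mk.injEq, pow2_zero, neg_zero]
      push_cast
      constructor <;> first | ring | (simp; done) | (simp; ring) | (simp [sub_eq_add_neg])

lemma tH_zpow (n : ℤ) : tH ^ n = Hgrp.mk 0 n := by
  induction n using Int.induction_on with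
  | zero => simp [Hgrp.one_def]
  | succ k ih =>
      rw [zpow_add_one, ih]
      simp [tH, Hgrp.mul_def]
  | pred k ih =>
      rw [zpow_sub_one, ih]
      simp only [tH, Hgrp.inv_def, Hgrp.mul_def, Hgrp.mk.injEq]
      constructor <;> ring

lemma aH_zpow_injective : Function.Injective fun n : ℤ => aH ^ n := by
  intro x y h
  simp only [aH_zpow, Hgrp.mk.injEq] at h
  have : ((x : DyadicQ) : ℚ) = ((y : DyadicQ) : ℚ) := by rw [h.1]
  simpa using this

lemma tH_zpow_injective : Function.Injective fun n : ℤ => tH ^ n := by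
  intro x y h
  simp only [tH_zpow, Hgrp.mk.injEq] at h
  exact h.2

/-- The homomorphism `ℤ →* G` given by powers of `g`. -/
def zintHom {G : Type*} [Group G] (g : G) : Multiplicative ℤ →* G where
  toFun n := g ^ (Multiplicative.toAdd n)
  map_one' := by simp
  map_mul' x y := by simp [zpow_add]

/-- For `g` with `n ↦ g ^ n` injective, `⟨g⟩ ≅ ℤ`. -/
noncomputable def zpowMulEquiv {G : Type*} [Group G] (g : G)
    (hg : Function.Injective fun n : ℤ => g ^ n) :
    Multiplicative ℤ ≃* Subgroup.zpowers g := by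
  refine MulEquiv.ofBijective
    ((zintHom g).codRestrict (Subgroup.zpowers g).toSubmonoid
      (fun n => Subgroup.mem_zpowers_iff.mpr ⟨Multiplicative.toAdd n, rfl⟩)) ⟨?_, ?_⟩
  · intro x y h
    have : g ^ (Multiplicative.toAdd x) = g ^ (Multiplicative.toAdd y) :=
      congrArg Subtype.val h
    exact hg this
  · rintro ⟨x, hx⟩
    obtain ⟨n, hn⟩ := Subgroup.mem_zpowers_iff.mp hx
    exact ⟨Multiplicative.ofAdd n, Subtype.ext hn⟩

/-- The associated isomorphism `⟨a⟩ ≅ ⟨t⟩`, `a ↦ t`, of the HNN extension defining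
the Baumslag group. -/
noncomputable def φBS : Subgroup.zpowers aH ≃* Subgroup.zpowers tH :=
  (zpowMulEquiv aH aH_zpow_injective).symm.trans (zpowMulEquiv tH tH_zpow_injective)

/-- The Baumslag group `G(1,2)`, as HNN extension of `H = BS(1,2)` with stable letter `b`,
associated subgroups `⟨a⟩` and `⟨t⟩`, and associated isomorphism `a ↦ t`. -/
noncomputable abbrev BG := HNNExtension Hgrp (Subgroup.zpowers aH) (Subgroup.zpowers tH) φBS

/-- The embedding of `H` into the Baumslag group. -/
noncomputable def ι : Hgrp →* BG := HNNExtension.of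

/-- The stable letter `b` of the Baumslag group. -/
noncomputable def bBG : BG := HNNExtension.t

/-- Conjugacy in the Baumslag group `G(1,2)`. -/
def conjBG (x y : BG) : Prop := ∃ z : BG, z * x * z⁻¹ = y

/-!
Conjugating `(0, m)` by `(c, k)` gives `(c (1 - 2^m), m)`, so `(0, m) ∼_H (r, m)` says exactly that
`2^m - 1` divides `r` in `ℤ[1/2]`. As `2^m - 1` is odd, inverting `2` does not change divisibility
between integers, and `gcd (2^a - 1) (2^b - 1) = 2^(gcd a b) - 1` turns divisibility of Mersenne
numbers into divisibility of exponents.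
-/

theorem Nat.pow_sub_one_dvd_pow_sub_one_iff {a : ℕ} (ha : 1 < a) {m n : ℕ} :
    a ^ m - 1 ∣ a ^ n - 1 ↔ m ∣ n := by
  rw [← Nat.gcd_eq_left_iff_dvd, Nat.pow_sub_one_gcd_pow_sub_one, ← Nat.gcd_eq_left_iff_dvd]
  refine ⟨fun h => Nat.pow_right_injective ha ?_, fun h => by rw [h]⟩
  exact Nat.sub_one_cancel (Nat.pow_pos (by omega)) (Nat.pow_pos (by omega)) h

theorem Int.pow_sub_one_dvd_pow_sub_one_iff {a : ℤ} (ha : 1 < a) {m n : ℕ} :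
    a ^ m - 1 ∣ a ^ n - 1 ↔ m ∣ n := by
  lift a to ℕ using (by omega)
  have hcast (k : ℕ) : (a : ℤ) ^ k - 1 = ((a ^ k - 1 : ℕ) : ℤ) := by
    rw [Nat.cast_sub (Nat.one_le_pow _ _ (by omega))]
    push_cast
    rfl
  rw [hcast, hcast, Int.natCast_dvd_natCast, Nat.pow_sub_one_dvd_pow_sub_one_iff (by omega)]

theorem DyadicQ.exists_two_pow_mul_eq_intCast {q : ℚ} (hq : q ∈ DyadicQ) :
    ∃ k : ℕ, ∃ n : ℤ, 2 ^ k * q = n := by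
  induction hq using Subring.closure_induction with
  | mem x hx =>
    rw [Set.mem_singleton_iff.mp hx]
    exact ⟨1, 1, by norm_num⟩
  | zero => exact ⟨0, 0, by simp⟩
  | one => exact ⟨0, 1, by simp⟩
  | add x y _ _ hx hy =>
    obtain ⟨k, n, hx⟩ := hx
    obtain ⟨l, p, hy⟩ := hy
    refine ⟨k + l, n * 2 ^ l + p * 2 ^ k, ?_⟩
    push_cast
    linear_combination (2:ℚ) ^ l * hx + (2:ℚ) ^ k * hy
  | neg x _ hx =>
    obtain ⟨k, n, hx⟩ := hx
    exact ⟨k, -n, by push_cast; linear_combination -hx⟩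
  | mul x y _ _ hx hy =>
    obtain ⟨k, n, hx⟩ := hx
    obtain ⟨l, p, hy⟩ := hy
    refine ⟨k + l, n * p, ?_⟩
    push_cast
    linear_combination (2:ℚ) ^ l * y * hx + n * hy

theorem DyadicQ.intCast_dvd_intCast_iff_of_odd {d : ℤ} (hd : Odd d) {n : ℤ} :
    (d : DyadicQ) ∣ (n : DyadicQ) ↔ d ∣ n := by
  refine ⟨fun ⟨x, hx⟩ => ?_, map_dvd (Int.castRingHom DyadicQ)⟩
  obtain ⟨k, j, hj⟩ := exists_two_pow_mul_eq_intCast x.2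
  have hxQ : (d : ℚ) * x = n := by exact_mod_cast congrArg Subtype.val hx.symm
  have hdj : d * j = n * 2 ^ k := by
    have : (d : ℚ) * j = n * 2 ^ k := by linear_combination (2:ℚ) ^ k * hxQ - d * hj
    exact_mod_cast this
  exact (Int.isCoprime_two_right.mpr hd).pow_right.dvd_of_dvd_mul_right ⟨j, hdj.symm⟩

theorem pow2_natCast (n : ℕ) : pow2 n = 2 ^ n := by
  simp only [pow2, zpow_natCast, Units.val_pow_eq_pow_val]
  rfl

theorem Hgrp.conj_mk_zero (z : Hgrp) (m : ℤ) : z * ⟨0, m⟩ * z⁻¹ = ⟨z.r * (1 - pow2 m), m⟩ := by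
  have hinv : pow2 z.m * pow2 (-z.m) = 1 := by rw [← pow2_add, add_neg_cancel, pow2_zero]
  simp only [Hgrp.mul_def, Hgrp.inv_def, pow2_add, Hgrp.mk.injEq]
  constructor
  · linear_combination (-(pow2 m * z.r)) * hinv
  · ring

theorem conjH_mk_zero_iff (m : ℤ) (r : DyadicQ) : conjH ⟨0, m⟩ ⟨r, m⟩ ↔ pow2 m - 1 ∣ r := by
  simp only [conjH, Hgrp.conj_mk_zero, Hgrp.mk.injEq, and_true]
  constructor
  · rintro ⟨z, hz⟩
    exact ⟨-z.r, by rw [← hz]; ring⟩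
  · rintro ⟨c, hc⟩
    exact ⟨⟨-c, 0⟩, by rw [hc]; ring⟩

theorem stmt4 (m : ℤ) (hm : 1 ≤ m) (s : ℕ) :
    (conjH ⟨0, m⟩ ⟨((2 ^ s - 1 : ℤ) : DyadicQ), m⟩ ↔ (2 ^ m.toNat - 1 : ℤ) ∣ 2 ^ s - 1) ∧
    ((2 ^ m.toNat - 1 : ℤ) ∣ 2 ^ s - 1 ↔ m ∣ (s : ℤ)) := by
  lift m to ℕ using (by omega)
  have hodd : Odd ((2 : ℤ) ^ m - 1) := (Int.even_pow.mpr ⟨even_two, by omega⟩).sub_odd odd_one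
  have hcast : pow2 m - 1 = (((2 : ℤ) ^ m - 1 : ℤ) : DyadicQ) := by
    rw [pow2_natCast]
    push_cast
    rfl
  rw [Int.toNat_natCast, conjH_mk_zero_iff, hcast, DyadicQ.intCast_dvd_intCast_iff_of_odd hodd,
    Int.pow_sub_one_dvd_pow_sub_one_iff one_lt_two, Int.natCast_dvd_natCast]
  exact ⟨Iff.rfl, Iff.rfl⟩
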